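/- arXiv:2302.07964 — 4 statements merged into one kernel-verified Lean document; each statement's English description precedes it below -/
import Mathlib

section
/- Let Q be a probability measure on ℝ^d whose support is contained in a Euclidean ball of radius r centered at u, and let π_ε be the entropic optimal transport coupling between a measure P and Q with regularization parameter ε > 0 (squared Euclidean cost). Then the entropic map T_ε(x) = E_{Y∼π_ε}[Y | X = x] is (4r²/ε)-Lipschitz continuous. -/
/-!
Differentiating the conditional mean `Tε x = E_{π x}[Y]` gives `(1/ε)` times the conditional
covariance. Both the conditional law and its mean lie in the ball `closedBall u r`, so every
centred sample `y - Tε x` has norm at most `2 r`; hence the covariance operator has norm at most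
`4 r²`, and the mean value inequality turns this derivative bound into the Lipschitz bound.
-/

open MeasureTheory Metric

lemma norm_sub_le_two_mul_of_mem_closedBall {E : Type*} [SeminormedAddCommGroup E]
    {u y z : E} {r : ℝ} (hy : y ∈ closedBall u r) (hz : z ∈ closedBall u r) :
    ‖y - z‖ ≤ 2 * r := by
  rw [mem_closedBall] at hy hz
  linarith [dist_triangle_right y z u, dist_eq_norm y z]

section Moments

variable {E : Type*} [NormedAddCommGroup E] [MeasurableSpace E]
  {μ : Measure E} [IsProbabilityMeasure μ]

lemma integral_id_mem_closedBall [NormedSpace ℝ E] [CompleteSpace E] [BorelSpace E]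
    [SecondCountableTopology E] {u : E} {r : ℝ} (h : ∀ᵐ y ∂μ, y ∈ closedBall u r) :
    ∫ y, y ∂μ ∈ closedBall u r := by
  have hbound : ∀ᵐ y ∂μ, ‖y‖ ≤ ‖u‖ + r := h.mono fun y hy => by
    linarith [norm_le_norm_add_norm_sub' y u, mem_closedBall_iff_norm.mp hy]
  exact (convex_closedBall u r).integral_mem isClosed_closedBall h
    (Integrable.of_bound aestronglyMeasurable_id _ hbound)

lemma norm_integral_inner_smul_le [InnerProductSpace ℝ E] {m : E} {R : ℝ}
    (h : ∀ᵐ y ∂μ, ‖y - m‖ ≤ R) (v : E) :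
    ‖∫ y, inner ℝ (y - m) v • (y - m) ∂μ‖ ≤ R ^ 2 * ‖v‖ := by
  have hpoint : ∀ᵐ y ∂μ, ‖inner ℝ (y - m) v • (y - m)‖ ≤ R ^ 2 * ‖v‖ := h.mono fun y hy => by
    calc ‖inner ℝ (y - m) v • (y - m)‖ ≤ ‖y - m‖ * ‖v‖ * ‖y - m‖ := by
          rw [norm_smul]
          gcongr
          exact norm_inner_le_norm _ _
      _ = ‖y - m‖ ^ 2 * ‖v‖ := by ring
      _ ≤ R ^ 2 * ‖v‖ := by gcongr
  simpa using norm_integral_le_of_norm_le_const hpoint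

end Moments

theorem entropic_map_lipschitz_general {d : ℕ} (r ε : ℝ) (hε : 0 < ε)
    (u : EuclideanSpace ℝ (Fin d))
    (π : EuclideanSpace ℝ (Fin d) → Measure (EuclideanSpace ℝ (Fin d)))
    (hπprob : ∀ x, IsProbabilityMeasure (π x))
    (hπsupp : ∀ x, ∀ᵐ y ∂(π x), y ∈ closedBall u r)
    (Tε : EuclideanSpace ℝ (Fin d) → EuclideanSpace ℝ (Fin d))
    (hT : ∀ x, Tε x = ∫ y, y ∂(π x))
    (A : EuclideanSpace ℝ (Fin d) → (EuclideanSpace ℝ (Fin d) →L[ℝ] EuclideanSpace ℝ (Fin d)))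
    (hderiv : ∀ x, HasFDerivAt Tε (A x) x)
    (hA : ∀ x v, A x v = (1 / ε) • ∫ y, (inner ℝ (y - Tε x) v : ℝ) • (y - Tε x) ∂(π x)) :
    ∀ x y, ‖Tε x - Tε y‖ ≤ (4 * r ^ 2 / ε) * ‖x - y‖ := by
  have hA_le : ∀ x, ‖A x‖ ≤ 4 * r ^ 2 / ε := fun x => by
    have := hπprob x
    have hmean : Tε x ∈ closedBall u r := hT x ▸ integral_id_mem_closedBall (hπsupp x)
    have hspread : ∀ᵐ y ∂(π x), ‖y - Tε x‖ ≤ 2 * r :=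
      (hπsupp x).mono fun y hy => norm_sub_le_two_mul_of_mem_closedBall hy hmean
    refine ContinuousLinearMap.opNorm_le_bound _ (by positivity) fun v => ?_
    calc ‖A x v‖ = (1 / ε) * ‖∫ y, inner ℝ (y - Tε x) v • (y - Tε x) ∂(π x)‖ := by
          rw [hA, norm_smul, Real.norm_of_nonneg (by positivity)]
      _ ≤ (1 / ε) * ((2 * r) ^ 2 * ‖v‖) := by
          gcongr
          exact norm_integral_inner_smul_le hspread v
      _ = 4 * r ^ 2 / ε * ‖v‖ := by ring
  intro x y
  exact convex_univ.norm_image_sub_le_of_norm_hasFDerivWithin_le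
    (fun z _ => (hderiv z).hasFDerivWithinAt) (fun z _ => hA_le z) (Set.mem_univ y) (Set.mem_univ x)

/-- If the target measure `Q` (hence each conditional `π x` of the entropic
optimal coupling) is supported in a Euclidean ball of radius `r` centered at `u`, and the
entropic map `Tε x = E_{Y ∼ π_ε}[Y | X = x]` has Jacobian `(1/ε) • Cov_{Y ∼ π_ε^x}(Y)`
(the Chewi–Pooladian lemma), then `Tε` is `(4 r² / ε)`-Lipschitz. -/
theorem entropic_map_lipschitz {d : ℕ} (r ε : ℝ) (hr : 0 < r) (hε : 0 < ε)
    (u : EuclideanSpace ℝ (Fin d))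
    (π : EuclideanSpace ℝ (Fin d) → Measure (EuclideanSpace ℝ (Fin d)))
    (hπprob : ∀ x, IsProbabilityMeasure (π x))
    (hπsupp : ∀ x, ∀ᵐ y ∂(π x), y ∈ closedBall u r)
    (Tε : EuclideanSpace ℝ (Fin d) → EuclideanSpace ℝ (Fin d))
    (hT : ∀ x, Tε x = ∫ y, y ∂(π x))
    (A : EuclideanSpace ℝ (Fin d) → (EuclideanSpace ℝ (Fin d) →L[ℝ] EuclideanSpace ℝ (Fin d)))
    (hderiv : ∀ x, HasFDerivAt Tε (A x) x)
    (hA : ∀ x v, A x v = (1 / ε) • ∫ y, (inner ℝ (y - Tε x) v : ℝ) • (y - Tε x) ∂(π x)) :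
    ∀ x y, ‖Tε x - Tε y‖ ≤ (4 * r ^ 2 / ε) * ‖x - y‖ :=
  entropic_map_lipschitz_general r ε hε u π hπprob hπsupp Tε hT A hderiv hA
end

section
/- Let P, Q be probability measures supported in the Euclidean ball B(0,r) in ℝ^d, and let (f*, g*) be optimal entropic dual potentials for the entropic OT problem with cost (1/2)‖x−y‖² and parameter ε > 0, normalized so ∫g* dQ = 0. Then ‖f*‖_{L^∞(P)} ≤ 2r² and ‖g*‖_{L^∞(Q)} ≤ 2r². -/
/-!
Write `c(x, y) = ‖x - y‖² / 2`, which lies in `[0, 2r²]` on the supports, and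
`softMax ε ν G = ε log ∫ exp (G / ε) dν`. Since `0 ≤ c ≤ 2r²`, the soft maximum of `g - c(x, ·)`
lies between `softMax g - 2r²` and `softMax g`, so the Schrödinger system puts `f` in
`[-softMax g, 2r² - softMax g]` and `g` in `[-softMax f, 2r² - softMax f]`. Integrating the
second bound against `∫ g dQ = 0` gives `softMax f ∈ [0, 2r²]`, hence `|g| ≤ 2r²`; then
`1 + t ≤ exp t` with `∫ g dQ = 0`, and `g ≤ 2r²`, give `softMax g ∈ [0, 2r²]`, hence `|f| ≤ 2r²`.
-/

open MeasureTheory Metric Real Set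

noncomputable section

namespace SoftMax

variable {α : Type*} [MeasurableSpace α] {ν : Measure α} {ε M : ℝ} {G c : α → ℝ}

def softMax (ε : ℝ) (ν : Measure α) (G : α → ℝ) : ℝ :=
  ε * log (∫ y, exp (G y / ε) ∂ν)

theorem softMax_of_not_integrable (hG : ¬Integrable (fun y => exp (G y / ε)) ν) :
    softMax ε ν G = 0 := by
  rw [softMax, integral_undef hG, log_zero, mul_zero]

theorem softMax_const [IsProbabilityMeasure ν] (hε : ε ≠ 0) (a : ℝ) :
    softMax ε ν (fun _ => a) = a := by
  rw [softMax, integral_const, probReal_univ, one_smul, log_exp, mul_div_cancel₀ _ hε]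

theorem integrable_exp_sub_div_iff (hc : AEStronglyMeasurable c ν)
    (hcM : ∀ᵐ y ∂ν, c y ∈ Icc 0 M) :
    Integrable (fun y => exp ((G y - c y) / ε)) ν ↔ Integrable (fun y => exp (G y / ε)) ν := by
  have hexp : ∀ s : ℝ, AEStronglyMeasurable (fun y => exp (s * c y / ε)) ν := fun s =>
    continuous_exp.comp_aestronglyMeasurable ((hc.const_mul s).mul_const ε⁻¹)
  have hbound : ∀ s : ℝ, ∀ᵐ y ∂ν, ‖exp (s * c y / ε)‖ ≤ exp (|s| * M / |ε|) := by
    intro s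
    filter_upwards [hcM] with y ⟨hc0, hcM⟩
    rw [norm_of_nonneg (exp_pos _).le, exp_le_exp]
    calc s * c y / ε ≤ |s * c y / ε| := le_abs_self _
      _ = |s| * c y / |ε| := by rw [abs_div, abs_mul, abs_of_nonneg hc0]
      _ ≤ |s| * M / |ε| := by gcongr
  have hmul : ∀ s : ℝ, ∀ H : α → ℝ, Integrable (fun y => exp (H y / ε)) ν →
      Integrable (fun y => exp ((H y + s * c y) / ε)) ν := by
    intro s H hH
    refine (hH.mul_bdd (hexp s) (hbound s)).congr (ae_of_all _ fun y => ?_)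
    simp only [← exp_add, add_div]
  constructor
  · intro h
    simpa using hmul 1 _ h
  · intro h
    simpa [sub_eq_add_neg] using hmul (-1) G h

theorem softMax_sub_of_not_integrable (hc : AEStronglyMeasurable c ν)
    (hcM : ∀ᵐ y ∂ν, c y ∈ Icc 0 M) (hG : ¬Integrable (fun y => exp (G y / ε)) ν) :
    softMax ε ν (fun y => G y - c y) = 0 :=
  softMax_of_not_integrable (mt (integrable_exp_sub_div_iff hc hcM).1 hG)

theorem softMax_mono [NeZero ν] (hε : 0 < ε) {G₁ G₂ : α → ℝ}
    (h₁ : Integrable (fun y => exp (G₁ y / ε)) ν) (h₂ : Integrable (fun y => exp (G₂ y / ε)) ν)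
    (hle : ∀ᵐ y ∂ν, G₁ y ≤ G₂ y) :
    softMax ε ν G₁ ≤ softMax ε ν G₂ := by
  refine mul_le_mul_of_nonneg_left (log_le_log (integral_exp_pos h₁) ?_) hε.le
  refine integral_mono_ae h₁ h₂ ?_
  filter_upwards [hle] with y hy
  gcongr

theorem softMax_sub_const [NeZero ν] (hε : 0 < ε) (hG : Integrable (fun y => exp (G y / ε)) ν)
    (a : ℝ) :
    softMax ε ν (fun y => G y - a) = softMax ε ν G - a := by
  have hsplit : ∀ y, exp ((G y - a) / ε) = exp (G y / ε) * exp (-a / ε) := fun y => by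
    rw [← exp_add]; ring_nf
  simp only [softMax, hsplit, integral_mul_const]
  rw [log_mul (integral_exp_pos hG).ne' (exp_pos _).ne', log_exp]
  field_simp
  ring

theorem softMax_sub_mem_Icc [NeZero ν] (hε : 0 < ε) (hM : 0 ≤ M)
    (hc : AEStronglyMeasurable c ν) (hcM : ∀ᵐ y ∂ν, c y ∈ Icc 0 M) :
    softMax ε ν (fun y => G y - c y) ∈ Icc (softMax ε ν G - M) (softMax ε ν G) := by
  by_cases hG : Integrable (fun y => exp (G y / ε)) ν
  · have hGc := (integrable_exp_sub_div_iff hc hcM).2 hG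
    have hGM := (integrable_exp_sub_div_iff aestronglyMeasurable_const
      (ae_of_all ν fun _ => ⟨hM, le_rfl⟩)).2 hG
    constructor
    · calc softMax ε ν G - M = softMax ε ν (fun y => G y - M) := (softMax_sub_const hε hG M).symm
        _ ≤ softMax ε ν (fun y => G y - c y) :=
          softMax_mono hε hGM hGc (hcM.mono fun _ hy => by linarith [hy.2])
    · exact softMax_mono hε hGc hG (hcM.mono fun _ hy => by linarith [hy.1])
  · rw [softMax_of_not_integrable hG, softMax_sub_of_not_integrable hc hcM hG]
    exact ⟨by linarith, le_rfl⟩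

theorem softMax_le [IsProbabilityMeasure ν] (hε : 0 < ε) (hM : 0 ≤ M)
    (hG : ∀ᵐ y ∂ν, G y ≤ M) :
    softMax ε ν G ≤ M := by
  by_cases hGi : Integrable (fun y => exp (G y / ε)) ν
  · calc softMax ε ν G ≤ softMax ε ν (fun _ => M) := softMax_mono hε hGi (integrable_const _) hG
      _ = M := softMax_const hε.ne' M
  · rwa [softMax_of_not_integrable hGi]

theorem softMax_nonneg [IsProbabilityMeasure ν] (hε : 0 < ε) (hG : Integrable G ν)
    (hG0 : 0 ≤ ∫ y, G y ∂ν) :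
    0 ≤ softMax ε ν G := by
  by_cases hGi : Integrable (fun y => exp (G y / ε)) ν
  · have hlin : Integrable (fun y => G y / ε + 1) ν := (hG.div_const ε).add (integrable_const 1)
    have hone : 1 ≤ ∫ y, exp (G y / ε) ∂ν := by
      calc (1 : ℝ) ≤ ∫ y, (G y / ε + 1) ∂ν := by
            rw [integral_add (hG.div_const ε) (integrable_const 1), integral_div, integral_const,
              probReal_univ, one_smul]
            have : 0 ≤ (∫ y, G y ∂ν) / ε := div_nonneg hG0 hε.le
            linarith
        _ ≤ ∫ y, exp (G y / ε) ∂ν := integral_mono hlin hGi fun y => add_one_le_exp _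
    exact mul_nonneg hε.le (log_nonneg hone)
  · rw [softMax_of_not_integrable hGi]

theorem aemeasurable_of_integrable_exp_div (hε : ε ≠ 0)
    (hG : Integrable (fun y => exp (G y / ε)) ν) :
    AEMeasurable G ν := by
  have hlog : (fun y => ε * log (exp (G y / ε))) = G := by
    funext y
    rw [log_exp, mul_div_cancel₀ _ hε]
  rw [← hlog]
  exact (measurable_log.comp_aemeasurable hG.aemeasurable).const_mul ε

theorem ae_mem_Icc_of_eq_neg_softMax_sub {β : Type*} [MeasurableSpace β] {μ : Measure β}
    [NeZero ν] (hε : 0 < ε) (hM : 0 ≤ M) {F : β → ℝ} {C : β → α → ℝ}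
    (hC : ∀ x, AEStronglyMeasurable (C x) ν) (hCM : ∀ᵐ x ∂μ, ∀ᵐ y ∂ν, C x y ∈ Icc 0 M)
    (hF : ∀ᵐ x ∂μ, F x = -softMax ε ν (fun y => G y - C x y)) :
    ∀ᵐ x ∂μ, F x ∈ Icc (-softMax ε ν G) (M - softMax ε ν G) := by
  filter_upwards [hF, hCM] with x hFx hCx
  have hx := softMax_sub_mem_Icc (G := G) hε hM (hC x) hCx
  rw [hFx]
  exact ⟨by linarith [hx.2], by linarith [hx.1]⟩

theorem ae_abs_le_of_mem_Icc_neg_softMax {β : Type*} [MeasurableSpace β] {μ : Measure β}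
    [IsProbabilityMeasure ν] (hε : 0 < ε) {F : β → ℝ}
    (hF : ∀ᵐ x ∂μ, F x ∈ Icc (-softMax ε ν G) (M - softMax ε ν G))
    (hG : ∀ᵐ y ∂ν, G y ∈ Icc (-softMax ε μ F) (M - softMax ε μ F))
    (hGi : Integrable G ν) (hG0 : ∫ y, G y ∂ν = 0) :
    (∀ᵐ x ∂μ, |F x| ≤ M) ∧ ∀ᵐ y ∂ν, |G y| ≤ M := by
  have hFmax : softMax ε μ F ∈ Icc 0 M := by
    have hlo := integral_mono_ae (integrable_const _) hGi (hG.mono fun _ hy => hy.1)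
    have hhi := integral_mono_ae hGi (integrable_const _) (hG.mono fun _ hy => hy.2)
    simp only [integral_const, probReal_univ, one_smul, hG0] at hlo hhi
    constructor <;> linarith
  have hGbound : ∀ᵐ y ∂ν, |G y| ≤ M := by
    filter_upwards [hG] with y hy
    exact abs_le.2 ⟨by linarith [hy.1, hFmax.2], by linarith [hy.2, hFmax.1]⟩
  have hM : 0 ≤ M := hFmax.1.trans hFmax.2
  have hGmax : softMax ε ν G ∈ Icc 0 M :=
    ⟨softMax_nonneg hε hGi hG0.ge, softMax_le hε hM (hGbound.mono fun _ hy => (abs_le.1 hy).2)⟩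
  refine ⟨?_, hGbound⟩
  filter_upwards [hF] with x hx
  exact abs_le.2 ⟨by linarith [hx.1, hGmax.2], by linarith [hx.2, hGmax.1]⟩

end SoftMax

theorem half_sq_norm_sub_mem_Icc_of_mem_closedBall {E : Type*} [SeminormedAddCommGroup E]
    {r : ℝ} {x y : E} (hx : x ∈ closedBall 0 r) (hy : y ∈ closedBall 0 r) :
    ‖x - y‖ ^ 2 / 2 ∈ Icc 0 (2 * r ^ 2) := by
  rw [mem_closedBall_zero_iff] at hx hy
  have hxy : ‖x - y‖ ≤ 2 * r := (norm_sub_le x y).trans (by linarith)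
  exact ⟨by positivity, by nlinarith [norm_nonneg (x - y)]⟩

end

open SoftMax

theorem entropic_potentials_bounded_general {d : ℕ} (r ε : ℝ) (hε : 0 < ε)
    (P Q : Measure (EuclideanSpace ℝ (Fin d)))
    [IsProbabilityMeasure P] [IsProbabilityMeasure Q]
    (hPsupp : ∀ᵐ x ∂P, x ∈ closedBall (0 : EuclideanSpace ℝ (Fin d)) r)
    (hQsupp : ∀ᵐ y ∂Q, y ∈ closedBall (0 : EuclideanSpace ℝ (Fin d)) r)
    (f g : EuclideanSpace ℝ (Fin d) → ℝ)
    (hf : ∀ᵐ x ∂P, f x = -ε * Real.log (∫ y, Real.exp ((g y - ‖x - y‖ ^ 2 / 2) / ε) ∂Q))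
    (hg : ∀ᵐ y ∂Q, g y = -ε * Real.log (∫ x, Real.exp ((f x - ‖x - y‖ ^ 2 / 2) / ε) ∂P))
    (hg0 : ∫ y, g y ∂Q = 0) :
    (∀ᵐ x ∂P, |f x| ≤ 2 * r ^ 2) ∧ (∀ᵐ y ∂Q, |g y| ≤ 2 * r ^ 2) := by
  have hM : 0 ≤ 2 * r ^ 2 := by positivity
  have hcost : ∀ᵐ x ∂P, ∀ᵐ y ∂Q, ‖x - y‖ ^ 2 / 2 ∈ Icc 0 (2 * r ^ 2) :=
    hPsupp.mono fun _ hx => hQsupp.mono fun _ hy => half_sq_norm_sub_mem_Icc_of_mem_closedBall hx hy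
  have hcost' : ∀ᵐ y ∂Q, ∀ᵐ x ∂P, ‖x - y‖ ^ 2 / 2 ∈ Icc 0 (2 * r ^ 2) :=
    hQsupp.mono fun _ hy => hPsupp.mono fun _ hx => half_sq_norm_sub_mem_Icc_of_mem_closedBall hx hy
  have hf' : ∀ᵐ x ∂P, f x = -softMax ε Q (fun y => g y - ‖x - y‖ ^ 2 / 2) :=
    hf.mono fun x hx => by rw [hx, neg_mul]; rfl
  have hg' : ∀ᵐ y ∂Q, g y = -softMax ε P (fun x => f x - ‖x - y‖ ^ 2 / 2) :=
    hg.mono fun y hy => by rw [hy, neg_mul]; rfl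
  have hfI := ae_mem_Icc_of_eq_neg_softMax_sub hε hM (fun _ => by fun_prop) hcost hf'
  have hgI := ae_mem_Icc_of_eq_neg_softMax_sub hε hM (fun _ => by fun_prop) hcost' hg'
  by_cases hgexp : Integrable (fun y => exp (g y / ε)) Q
  · have hgi : Integrable g Q :=
      .of_mem_Icc _ _ (aemeasurable_of_integrable_exp_div hε.ne' hgexp) hgI
    exact ae_abs_le_of_mem_Icc_neg_softMax hε hfI hgI hgi hg0
  -- Otherwise every integral in the equation for `f` is the junk value `0`, so `f = 0` a.e.
  have hf0 : f =ᵐ[P] 0 := by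
    filter_upwards [hf', hcost] with x hfx hcx
    rw [hfx, softMax_sub_of_not_integrable (by fun_prop) hcx hgexp, neg_zero, Pi.zero_apply]
  have hfi : Integrable f P := (integrable_zero _ _ _).congr hf0.symm
  have hf0' : ∫ x, f x ∂P = 0 := by simp [integral_congr_ae hf0]
  exact (ae_abs_le_of_mem_Icc_neg_softMax hε hgI hfI hfi hf0').symm

/-- If `P, Q` are supported in `B(0,r)` and `(f, g)` solve the Schrödinger
system for entropic OT with cost `(1/2)‖x−y‖²` and parameter `ε > 0`, normalized so that
`∫ g dQ = 0`, then `‖f‖_{L^∞(P)} ≤ 2r²` and `‖g‖_{L^∞(Q)} ≤ 2r²`. -/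
theorem entropic_potentials_bounded {d : ℕ} (r ε : ℝ) (hr : 0 < r) (hε : 0 < ε)
    (P Q : Measure (EuclideanSpace ℝ (Fin d)))
    [IsProbabilityMeasure P] [IsProbabilityMeasure Q]
    (hPsupp : ∀ᵐ x ∂P, x ∈ closedBall (0 : EuclideanSpace ℝ (Fin d)) r)
    (hQsupp : ∀ᵐ y ∂Q, y ∈ closedBall (0 : EuclideanSpace ℝ (Fin d)) r)
    (f g : EuclideanSpace ℝ (Fin d) → ℝ)
    (hf : ∀ᵐ x ∂P, f x = -ε * Real.log (∫ y, Real.exp ((g y - ‖x - y‖ ^ 2 / 2) / ε) ∂Q))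
    (hg : ∀ᵐ y ∂Q, g y = -ε * Real.log (∫ x, Real.exp ((f x - ‖x - y‖ ^ 2 / 2) / ε) ∂P))
    (hg0 : ∫ y, g y ∂Q = 0) :
    (∀ᵐ x ∂P, |f x| ≤ 2 * r ^ 2) ∧ (∀ᵐ y ∂Q, |g y| ≤ 2 * r ^ 2) :=
  entropic_potentials_bounded_general r ε hε P Q hPsupp hQsupp f g hf hg hg0
end

section
/- Let h: ℝ^d × ℝ^d → ℝ be bounded with h(x,x) = 0 for all x. Let X, X', X₁,…,X_n ∼ P and Y, Y', Y₁,…,Y_n ∼ Q be jointly independent. Then E| (1/n²)∑_{i,j} [2h(X_i,Y_j) − h(X_i,X_j) − h(Y_i,Y_j)] − E[2h(X,Y) − h(X,X') − h(Y,Y')] | ≤ 8‖h‖_∞ √(π/n). -/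
/-!
Pairing the samples as `Wᵢ = (Xᵢ, Yᵢ)`, i.i.d. with law `P ⊗ Q`, turns the statistic into the
V-statistic `n⁻² T`, `T = ∑ᵢⱼ k(Wᵢ, Wⱼ)`, of the kernel
`k((x, y), (x', y')) = 2 h(x, y') - h(x, x') - h(y, y')`, bounded by `4‖h‖_∞`. Its off-diagonal
terms have exactly the population mean, so the bias comes from the `n` diagonal terms only and is
at most `4‖h‖_∞ / n`. The fluctuation is controlled by `E|T - E T| ≤ √(Var T)`: the terms
`k(Wᵢ, Wⱼ)` and `k(Wₖ, Wₗ)` are independent unless `{i, j}` meets `{k, l}`, so at most `4n³` of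
the `n⁴` covariances survive, each at most `(4‖h‖_∞)²`. Altogether the deviation is at most
`8‖h‖_∞/√n + 4‖h‖_∞/n ≤ 12‖h‖_∞/√n ≤ 8‖h‖_∞ √(π/n)`.
-/

open MeasureTheory ProbabilityTheory Function Finset

section Moments

variable {Ω : Type*} [MeasurableSpace Ω] {μ : Measure Ω}

lemma abs_integral_le_of_abs_le [IsProbabilityMeasure μ] {f : Ω → ℝ} {C : ℝ}
    (hf : ∀ ω, |f ω| ≤ C) : |∫ ω, f ω ∂μ| ≤ C := by
  simpa using norm_integral_le_of_norm_le_const (μ := μ) (f := f)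
    (ae_of_all μ fun ω => (Real.norm_eq_abs _).trans_le (hf ω))

lemma variance_le_sq_of_abs_le [IsProbabilityMeasure μ] {X : Ω → ℝ} (hX : AEMeasurable X μ)
    {B : ℝ} (hB : ∀ ω, |X ω| ≤ B) : Var[X; μ] ≤ B ^ 2 := by
  convert variance_le_sq_of_bounded (ae_of_all μ fun ω => abs_le.mp (hB ω)) hX using 1
  ring

lemma two_mul_abs_covariance_le [IsFiniteMeasure μ] {X Y : Ω → ℝ} (hX : MemLp X 2 μ)
    (hY : MemLp Y 2 μ) : 2 * |cov[X, Y; μ]| ≤ Var[X; μ] + Var[Y; μ] := by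
  have hadd := variance_add hX hY
  have hsub := variance_sub hX hY
  have := variance_nonneg (X + Y) μ
  have := variance_nonneg (X - Y) μ
  have h2 : |2 * cov[X, Y; μ]| ≤ Var[X; μ] + Var[Y; μ] := abs_le.mpr ⟨by linarith, by linarith⟩
  rwa [abs_mul, abs_two] at h2

lemma variance_sum_le_of_indepFun [IsProbabilityMeasure μ] {κ : Type*} [Fintype κ]
    {F : κ → Ω → ℝ} (hF : ∀ p, Measurable (F p)) {B : ℝ} (hB : ∀ p ω, |F p ω| ≤ B)
    (D : κ → Finset κ) (hD : ∀ p, ∀ q ∉ D p, IndepFun (F p) (F q) μ) :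
    Var[fun ω => ∑ p, F p ω; μ] ≤ B ^ 2 * ∑ p, #(D p) := by
  have hL2 p : MemLp (F p) 2 μ := .of_bound (hF p).aestronglyMeasurable B (ae_of_all μ (hB p))
  have hcov p q : cov[F p, F q; μ] ≤ B ^ 2 := by
    have := two_mul_abs_covariance_le (hL2 p) (hL2 q)
    have := variance_le_sq_of_abs_le (μ := μ) (hF p).aemeasurable (hB p)
    have := variance_le_sq_of_abs_le (μ := μ) (hF q).aemeasurable (hB q)
    linarith [le_abs_self cov[F p, F q; μ]]
  rw [variance_fun_sum hL2, Nat.cast_sum, mul_sum]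
  refine sum_le_sum fun p _ => ?_
  rw [← sum_subset (subset_univ (D p))
    fun q _ hq => (hD p q hq).covariance_eq_zero (hL2 p) (hL2 q)]
  calc ∑ q ∈ D p, cov[F p, F q; μ] ≤ ∑ q ∈ D p, B ^ 2 := sum_le_sum fun q _ => hcov p q
    _ = B ^ 2 * #(D p) := by rw [sum_const, nsmul_eq_mul, mul_comm]

lemma integral_abs_sub_integral_le_sqrt_variance [IsProbabilityMeasure μ] {X : Ω → ℝ}
    (hX : MemLp X 2 μ) : ∫ ω, |X ω - μ[X]| ∂μ ≤ √Var[X; μ] := by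
  set Y : Ω → ℝ := fun ω => |X ω - μ[X]|
  have hY : MemLp Y 2 μ := (hX.sub (memLp_const _)).abs
  have hY2 : μ[Y ^ 2] = Var[X; μ] := by
    simp only [Y, Pi.pow_apply, sq_abs]
    exact (variance_eq_integral hX.aemeasurable).symm
  have hVarY := variance_nonneg Y μ
  rw [variance_eq_sub hY, hY2] at hVarY
  exact Real.le_sqrt_of_sq_le (by linarith)

lemma integral_abs_const_mul_sub_le [IsProbabilityMeasure μ] {X : Ω → ℝ} (hX : MemLp X 2 μ)
    (c a : ℝ) : ∫ ω, |c * X ω - a| ∂μ ≤ |c| * √Var[X; μ] + |c * μ[X] - a| := by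
  have hXint := hX.integrable one_le_two
  have hpt ω : |c * X ω - a| ≤ |c| * |X ω - μ[X]| + |c * μ[X] - a| := by
    rw [← abs_mul]
    exact (abs_add_le _ _).trans_eq' (by ring_nf)
  calc ∫ ω, |c * X ω - a| ∂μ ≤ ∫ ω, (|c| * |X ω - μ[X]| + |c * μ[X] - a|) ∂μ :=
        integral_mono ((hXint.const_mul c).sub (integrable_const a)).abs
          (((hXint.sub (integrable_const _)).abs.const_mul _).add (integrable_const _)) hpt
    _ = |c| * ∫ ω, |X ω - μ[X]| ∂μ + |c * μ[X] - a| := by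
        rw [integral_add _ (integrable_const _), integral_const_mul, integral_const, probReal_univ,
          one_smul]
        exact (hXint.sub (integrable_const _)).abs.const_mul _
    _ ≤ |c| * √Var[X; μ] + |c * μ[X] - a| := by
        gcongr
        exact integral_abs_sub_integral_le_sqrt_variance hX

end Moments

lemma integral_two_mul_sub_sub_prod {α β : Type*} [MeasurableSpace α] [MeasurableSpace β]
    {P : Measure α} {Q : Measure β} [IsProbabilityMeasure P] [IsProbabilityMeasure Q]
    {f : α × β → ℝ} {a : α → ℝ} {b : β → ℝ} (hf : Integrable f (P.prod Q)) (ha : Integrable a P)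
    (hb : Integrable b Q) :
    ∫ w, (2 * f w - a w.1 - b w.2) ∂P.prod Q
      = 2 * ∫ w, f w ∂P.prod Q - ∫ x, a x ∂P - ∫ y, b y ∂Q := by
  rw [integral_sub _ (hb.comp_snd P), integral_sub (hf.const_mul 2) (ha.comp_fst Q),
    integral_const_mul, integral_fun_fst, integral_fun_snd]
  · simp
  · exact (hf.const_mul 2).sub (ha.comp_fst Q)

section Coordinates

variable {ι α β : Type*} [Fintype ι] [MeasurableSpace α] [MeasurableSpace β]
  {ν : ι → Measure α} [∀ i, IsProbabilityMeasure (ν i)]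

lemma iIndepFun_eval : iIndepFun (fun i (w : ι → α) => w i) (Measure.pi ν) :=
  iIndepFun_pi (X := fun _ => id) fun _ => aemeasurable_id

lemma indepFun_comp_eval_pair {k : α → α → β} (hk : Measurable (uncurry k)) {i j i' j' : ι}
    (hii' : i ≠ i') (hij' : i ≠ j') (hji' : j ≠ i') (hjj' : j ≠ j') :
    IndepFun (fun w => k (w i) (w j)) (fun w => k (w i') (w j')) (Measure.pi ν) :=
  (iIndepFun_eval.indepFun_prodMk_prodMk measurable_pi_apply i j i' j' hii' hij' hji' hjj').comp
    hk hk

lemma map_eval_pair {i j : ι} (hij : i ≠ j) :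
    (Measure.pi ν).map (fun w => (w i, w j)) = (ν i).prod (ν j) := by
  have hind := (iIndepFun_eval (ν := ν)).indepFun hij
  rw [indepFun_iff_map_prod_eq_prod_map_map (measurable_pi_apply i).aemeasurable
    (measurable_pi_apply j).aemeasurable] at hind
  simpa [(measurePreserving_eval ν i).map_eq, (measurePreserving_eval ν j).map_eq] using hind

lemma integral_comp_eval_pair {i j : ι} (hij : i ≠ j) {k : α → α → ℝ}
    (hk : Integrable (uncurry k) ((ν i).prod (ν j))) :
    ∫ w, k (w i) (w j) ∂Measure.pi ν = ∫ x, ∫ y, k x y ∂ν j ∂ν i := by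
  rw [integral_integral hk, ← map_eval_pair hij, integral_map (by fun_prop)]
  rw [map_eval_pair hij]
  exact hk.aestronglyMeasurable

end Coordinates

section VStatistic

variable {ι α : Type*} [Fintype ι] [DecidableEq ι] [MeasurableSpace α] {k : α → α → ℝ} {B : ℝ}

lemma card_indices_meeting_le (i j : ι) :
    #({i, j} ×ˢ univ ∪ univ ×ˢ {i, j} : Finset (ι × ι)) ≤ 4 * Fintype.card ι := by
  grw [card_union_le, card_product, card_product, card_le_two]
  simp only [card_univ]
  omega

lemma variance_sum_sum_comp_eval_le {ν : ι → Measure α} [∀ i, IsProbabilityMeasure (ν i)]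
    (hk : Measurable (uncurry k)) (hB : ∀ x y, |k x y| ≤ B) :
    Var[fun w => ∑ i, ∑ j, k (w i) (w j); Measure.pi ν] ≤ 4 * Fintype.card ι ^ 3 * B ^ 2 := by
  have hvar := variance_sum_le_of_indepFun (μ := Measure.pi ν)
    (F := fun p w => k (w p.1) (w p.2)) (fun _ => by fun_prop) (fun _ _ => hB _ _)
    (fun p => {p.1, p.2} ×ˢ univ ∪ univ ×ˢ {p.1, p.2}) fun p q hq => by
      simp only [mem_union, mem_product, mem_insert, mem_singleton, mem_univ, and_true,
        true_and, not_or] at hq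
      exact indepFun_comp_eval_pair hk (Ne.symm hq.1.1) (Ne.symm hq.2.1) (Ne.symm hq.1.2)
        (Ne.symm hq.2.2)
  simp only [← Fintype.sum_prod_type']
  refine hvar.trans ?_
  grw [sum_le_sum fun p _ => card_indices_meeting_le p.1 p.2]
  simp only [sum_const, card_univ, Fintype.card_prod, smul_eq_mul]
  push_cast
  exact le_of_eq (by ring)

lemma integral_sum_sum_comp_eval {ρ : Measure α} [IsProbabilityMeasure ρ]
    (hk : Measurable (uncurry k)) (hB : ∀ x y, |k x y| ≤ B) :
    ∫ w, ∑ i, ∑ j, k (w i) (w j) ∂Measure.pi (fun _ : ι => ρ)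
      = Fintype.card ι ^ 2 * ∫ x, ∫ y, k x y ∂ρ ∂ρ
        + Fintype.card ι * (∫ x, k x x ∂ρ - ∫ x, ∫ y, k x y ∂ρ ∂ρ) := by
  have hint i j : Integrable (fun w => k (w i) (w j)) (Measure.pi fun _ : ι => ρ) :=
    .of_bound (by fun_prop : Measurable fun w : ι → α => k (w i) (w j)).aestronglyMeasurable B
      (ae_of_all _ fun _ => hB _ _)
  have hterm i j : ∫ w, k (w i) (w j) ∂Measure.pi (fun _ : ι => ρ)
      = ∫ x, ∫ y, k x y ∂ρ ∂ρ + if i = j then ∫ x, k x x ∂ρ - ∫ x, ∫ y, k x y ∂ρ ∂ρ else 0 := by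
    split_ifs with hij
    · subst hij
      rw [integral_comp_eval (μ := fun _ : ι => ρ) (f := fun x => k x x)
        (by fun_prop : Measurable fun x => k x x).aestronglyMeasurable]
      ring
    · rw [integral_comp_eval_pair hij (.of_bound hk.aestronglyMeasurable B
        (ae_of_all _ fun _ => hB _ _)), add_zero]
  rw [integral_finsetSum _ fun i _ => integrable_finsetSum _ fun j _ => hint i j]
  simp_rw [integral_finsetSum _ fun j _ => hint _ j, hterm, sum_add_distrib, sum_ite_eq,
    mem_univ, if_true, sum_const, card_univ, nsmul_eq_mul]
  ring

end VStatistic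

theorem integral_abs_vStatistic_sub_le {α : Type*} [MeasurableSpace α] {ρ : Measure α}
    [IsProbabilityMeasure ρ] {n : ℕ} (hn : 0 < n) {k : α → α → ℝ} (hk : Measurable (uncurry k))
    {B : ℝ} (hB : ∀ x y, |k x y| ≤ B) :
    ∫ w, |1 / (n : ℝ) ^ 2 * ∑ i, ∑ j, k (w i) (w j) - ∫ x, ∫ y, k x y ∂ρ ∂ρ|
        ∂Measure.pi (fun _ : Fin n => ρ)
      ≤ 2 * B / √n + |∫ x, k x x ∂ρ - ∫ x, ∫ y, k x y ∂ρ ∂ρ| / n := by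
  have hn' : (0 : ℝ) < n := by exact_mod_cast hn
  have hB0 : 0 ≤ B := by
    obtain ⟨x⟩ := nonempty_of_isProbabilityMeasure ρ
    exact (abs_nonneg _).trans (hB x x)
  have hT : MemLp (fun w => ∑ i, ∑ j, k (w i) (w j)) 2 (Measure.pi fun _ : Fin n => ρ) :=
    memLp_finsetSum _ fun i _ => memLp_finsetSum _ fun j _ =>
      .of_bound (by fun_prop : Measurable fun w : Fin n → α => k (w i) (w j)).aestronglyMeasurable
        B (ae_of_all _ fun _ => hB _ _)
  have hvar := variance_sum_sum_comp_eval_le (ν := fun _ : Fin n => ρ) hk hB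
  have hmean := integral_sum_sum_comp_eval (ι := Fin n) (ρ := ρ) hk hB
  rw [Fintype.card_fin] at hvar hmean
  refine (integral_abs_const_mul_sub_le hT _ _).trans (add_le_add ?_ (le_of_eq ?_))
  · have hsqrt : √(4 * (n : ℝ) ^ 3 * B ^ 2) = 2 * B * n * √n := by
      rw [show (4 : ℝ) * n ^ 3 * B ^ 2 = (2 * B * n) ^ 2 * n by ring,
        Real.sqrt_mul (sq_nonneg _), Real.sqrt_sq (by positivity)]
    grw [hvar, hsqrt, abs_of_pos (by positivity)]
    refine le_of_eq ?_
    field_simp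
    rw [Real.sq_sqrt hn'.le]
    ring
  · have hbias (θ δ : ℝ) : 1 / (n : ℝ) ^ 2 * (n ^ 2 * θ + n * (δ - θ)) - θ = (δ - θ) / n := by
      field_simp
      ring
    rw [hmean, hbias, abs_div, abs_of_pos hn']

section EnergyKernel

variable {E : Type*}

def energyKernel (h : E → E → ℝ) (w w' : E × E) : ℝ :=
  2 * h w.1 w'.2 - h w.1 w'.1 - h w.2 w'.2

variable {h : E → E → ℝ} {C : ℝ}

lemma abs_energyKernel_le (hC : ∀ x y, |h x y| ≤ C) (w w' : E × E) :
    |energyKernel h w w'| ≤ 4 * C := by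
  unfold energyKernel
  have := abs_le.mp (hC w.1 w'.2)
  have := abs_le.mp (hC w.1 w'.1)
  have := abs_le.mp (hC w.2 w'.2)
  exact abs_le.mpr ⟨by linarith, by linarith⟩

variable [MeasurableSpace E]

lemma measurable_energyKernel (hh : Measurable (uncurry h)) :
    Measurable (uncurry (energyKernel h)) := by
  unfold energyKernel
  fun_prop

variable (hh : Measurable (uncurry h)) (hC : ∀ x y, |h x y| ≤ C)
  {P Q : Measure E} [IsProbabilityMeasure P] [IsProbabilityMeasure Q]
include hh hC

omit [IsProbabilityMeasure P] [IsProbabilityMeasure Q] in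
lemma integrable_uncurry_of_abs_le (μ ν : Measure E) [IsFiniteMeasure μ] [IsFiniteMeasure ν] :
    Integrable (uncurry h) (μ.prod ν) :=
  .of_bound hh.aestronglyMeasurable C (ae_of_all _ fun w => hC w.1 w.2)

lemma integral_energyKernel_diag :
    ∫ w, energyKernel h w w ∂P.prod Q
      = 2 * ∫ x, ∫ y, h x y ∂Q ∂P - ∫ x, h x x ∂P - ∫ y, h y y ∂Q := by
  have hdiag : Measurable fun x => h x x := by fun_prop
  rw [integral_integral (integrable_uncurry_of_abs_le hh hC P Q)]
  exact integral_two_mul_sub_sub_prod (integrable_uncurry_of_abs_le hh hC P Q)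
    (.of_bound hdiag.aestronglyMeasurable C (ae_of_all _ fun x => hC x x))
    (.of_bound hdiag.aestronglyMeasurable C (ae_of_all _ fun x => hC x x))

lemma integral_integral_energyKernel :
    ∫ w, ∫ w', energyKernel h w w' ∂P.prod Q ∂P.prod Q
      = 2 * ∫ x, ∫ y, h x y ∂Q ∂P - ∫ x, ∫ x', h x x' ∂P ∂P - ∫ y, ∫ y', h y y' ∂Q ∂Q := by
  have hsec (x : E) (μ : Measure E) [IsProbabilityMeasure μ] : Integrable (h x) μ :=
    .of_bound (by fun_prop) C (ae_of_all _ fun y => hC x y)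
  have hinner (w : E × E) : ∫ w', energyKernel h w w' ∂P.prod Q
      = 2 * ∫ y, h w.1 y ∂Q - ∫ x', h w.1 x' ∂P - ∫ y', h w.2 y' ∂Q := by
    have := integral_two_mul_sub_sub_prod (f := fun w' => h w.1 w'.2) ((hsec w.1 Q).comp_snd P)
      (hsec w.1 P) (hsec w.2 Q)
    rwa [integral_fun_snd, probReal_univ, one_smul] at this
  have hF := (integrable_uncurry_of_abs_le hh hC P Q).integral_prod_left
  have := integral_two_mul_sub_sub_prod (f := fun w => ∫ y, h w.1 y ∂Q) (hF.comp_fst Q)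
    (integrable_uncurry_of_abs_le hh hC P P).integral_prod_left
    (integrable_uncurry_of_abs_le hh hC Q Q).integral_prod_left
  rw [integral_fun_fst (fun x => ∫ y, h x y ∂Q), probReal_univ, one_smul] at this
  simp_rw [hinner]
  exact this

lemma abs_integral_energyKernel_diag_sub_le :
    |∫ w, energyKernel h w w ∂P.prod Q - ∫ w, ∫ w', energyKernel h w w' ∂P.prod Q ∂P.prod Q|
      ≤ 4 * C := by
  rw [integral_energyKernel_diag hh hC, integral_integral_energyKernel hh hC]
  have hPP := abs_integral_le_of_abs_le (μ := P) fun x => abs_integral_le_of_abs_le (μ := P) (hC x)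
  have hQQ := abs_integral_le_of_abs_le (μ := Q) fun y => abs_integral_le_of_abs_le (μ := Q) (hC y)
  have hP := abs_integral_le_of_abs_le (μ := P) fun x => hC x x
  have hQ := abs_integral_le_of_abs_le (μ := Q) fun y => hC y y
  rw [abs_le] at *
  constructor <;> linarith

end EnergyKernel

lemma two_mul_div_sqrt_add_div_le_mul_sqrt_pi_div {C n : ℝ} (hC : 0 ≤ C) (hn : 1 ≤ n) :
    2 * (4 * C) / √n + 4 * C / n ≤ 8 * C * √(Real.pi / n) := by
  have hs : 1 ≤ √n := Real.one_le_sqrt.mpr hn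
  have hsn : √n ≤ n := (Real.sqrt_le_left (by linarith)).mpr (by nlinarith)
  have hpi : 3 / 2 ≤ √Real.pi :=
    (Real.le_sqrt (by norm_num) Real.pi_pos.le).mpr (by nlinarith [Real.pi_gt_three])
  calc 2 * (4 * C) / √n + 4 * C / n ≤ 2 * (4 * C) / √n + 4 * C / √n := by gcongr
    _ = 8 * C * (3 / 2) / √n := by ring
    _ ≤ 8 * C * √Real.pi / √n := by gcongr
    _ = 8 * C * √(Real.pi / n) := by rw [Real.sqrt_div' _ (by linarith), mul_div_assoc]

theorem vstat_expected_deviation_bound_general {d : ℕ} (n : ℕ) (hn : 0 < n) (C : ℝ)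
    (h : EuclideanSpace ℝ (Fin d) → EuclideanSpace ℝ (Fin d) → ℝ)
    (hmeas : Measurable (Function.uncurry h))
    (hbd : ∀ x y, |h x y| ≤ C)
    (P Q : Measure (EuclideanSpace ℝ (Fin d)))
    [IsProbabilityMeasure P] [IsProbabilityMeasure Q] :
    ∫ xy : (Fin n → EuclideanSpace ℝ (Fin d)) × (Fin n → EuclideanSpace ℝ (Fin d)),
        |(1 / (n : ℝ) ^ 2) * ∑ i : Fin n, ∑ j : Fin n,
            (2 * h (xy.1 i) (xy.2 j) - h (xy.1 i) (xy.1 j) - h (xy.2 i) (xy.2 j))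
          - (2 * (∫ x, ∫ y, h x y ∂Q ∂P) - (∫ x, ∫ x', h x x' ∂P ∂P)
              - (∫ y, ∫ y', h y y' ∂Q ∂Q))|
        ∂((Measure.pi fun _ : Fin n => P).prod (Measure.pi fun _ : Fin n => Q))
      ≤ 8 * C * Real.sqrt (Real.pi / n) := by
  have hV := integral_abs_vStatistic_sub_le (ρ := P.prod Q) hn (measurable_energyKernel hmeas)
    (abs_energyKernel_le hbd)
  have hbias := abs_integral_energyKernel_diag_sub_le hmeas hbd (P := P) (Q := Q)
  rw [integral_integral_energyKernel hmeas hbd] at hV hbias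
  -- `w ↦ (fun i => (w i).1, fun i => (w i).2)` carries `(P ⊗ Q)ⁿ` to `Pⁿ ⊗ Qⁿ`
  rw [← (measurePreserving_arrowProdEquivProdArrow _ _ (Fin n) (fun _ => P)
    (fun _ => Q)).integral_comp']
  refine hV.trans ?_
  grw [hbias]
  exact two_mul_div_sqrt_add_div_le_mul_sqrt_pi_div ((abs_nonneg _).trans (hbd 0 0))
    (by exact_mod_cast hn)

/-- For a bounded kernel `h` with `h(x,x) = 0` and i.i.d. samples
`X₁,…,X_n ∼ P`, `Y₁,…,Y_n ∼ Q` (jointly independent), the V-statistic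
`(1/n²)∑_{i,j}[2h(Xᵢ,Yⱼ) − h(Xᵢ,Xⱼ) − h(Yᵢ,Yⱼ)]` deviates from its population counterpart
`E[2h(X,Y) − h(X,X') − h(Y,Y')]` by at most `8‖h‖_∞ √(π/n)` in expectation. -/
theorem vstat_expected_deviation_bound {d : ℕ} (n : ℕ) (hn : 0 < n) (C : ℝ)
    (h : EuclideanSpace ℝ (Fin d) → EuclideanSpace ℝ (Fin d) → ℝ)
    (hmeas : Measurable (Function.uncurry h))
    (hbd : ∀ x y, |h x y| ≤ C) (hdiag : ∀ x, h x x = 0)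
    (P Q : Measure (EuclideanSpace ℝ (Fin d)))
    [IsProbabilityMeasure P] [IsProbabilityMeasure Q] :
    ∫ xy : (Fin n → EuclideanSpace ℝ (Fin d)) × (Fin n → EuclideanSpace ℝ (Fin d)),
        |(1 / (n : ℝ) ^ 2) * ∑ i : Fin n, ∑ j : Fin n,
            (2 * h (xy.1 i) (xy.2 j) - h (xy.1 i) (xy.1 j) - h (xy.2 i) (xy.2 j))
          - (2 * (∫ x, ∫ y, h x y ∂Q ∂P) - (∫ x, ∫ x', h x x' ∂P ∂P)
              - (∫ y, ∫ y', h y y' ∂Q ∂Q))|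
        ∂((Measure.pi fun _ : Fin n => P).prod (Measure.pi fun _ : Fin n => Q))
      ≤ 8 * C * Real.sqrt (Real.pi / n) :=
  vstat_expected_deviation_bound_general n hn C h hmeas hbd P Q
end

section
/- Let f, f', g, g' be functions bounded in absolute value by L on the relevant sample points and let the pairwise costs satisfy 0 ≤ (1/2)‖X_i − Y_j‖² ≤ 2r². Then the empirical entropic dual objective Φ_n(f,g) = (1/n)∑[f(X_i)+g(Y_i)] − (ε/n²)∑_{i,j} exp((1/ε)[f(X_i)+g(Y_j)−(1/2)‖X_i−Y_j‖²]) + ε is δ-strongly concave along the segment between (f,g) and (f',g'), with δ = exp(−(2L+2r²)/ε)/ε, with respect to the norm ‖·‖²_{L²(Pⁿ)×L²(Qⁿ)}, provided that g and g' both have empirical mean zero on the Y samples. -/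
/-! Only the exponential part of `Φₙ` is not affine along the segment, so
`h''(t) = -(1/(εn²)) ∑ᵢⱼ (Δfᵢ + Δgⱼ)² exp((uₜ(Xᵢ) + vₜ(Yⱼ) - ½‖Xᵢ - Yⱼ‖²)/ε)`, with `(uₜ, vₜ)`
the point of the segment. The potentials stay bounded by `L` along the segment and the cost by
`2r²`, so each exponential is at least `exp(-(2L + 2r²)/ε)`. Since `Δg` has mean zero the cross
term drops out: `(1/n²) ∑ᵢⱼ (Δfᵢ + Δgⱼ)² = ‖Δf‖²_{L²(Pⁿ)} + ‖Δg‖²_{L²(Qⁿ)}`. -/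

open Finset Real

section SecondDerivative

variable {ι : Type*} (s : Finset ι) (a b : ι → ℝ)

theorem hasDerivAt_sum_mul_exp_affine (c : ι → ℝ) (t : ℝ) :
    HasDerivAt (fun τ => ∑ k ∈ s, c k * exp (a k + τ * b k))
      (∑ k ∈ s, c k * b k * exp (a k + t * b k)) t :=
  HasDerivAt.fun_sum fun k _ =>
    ((((hasDerivAt_mul_const (b k)).const_add (a k)).exp).const_mul (c k)).congr_deriv (by ring)

theorem deriv_deriv_affine_add_sum_mul_exp (α β : ℝ) (c : ι → ℝ) (t : ℝ) :
    deriv (deriv fun τ => α + τ * β + ∑ k ∈ s, c k * exp (a k + τ * b k)) t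
      = ∑ k ∈ s, c k * b k ^ 2 * exp (a k + t * b k) := by
  have hderiv : deriv (fun τ => α + τ * β + ∑ k ∈ s, c k * exp (a k + τ * b k))
      = fun τ => β + ∑ k ∈ s, (c k * b k) * exp (a k + τ * b k) := funext fun τ =>
    (((hasDerivAt_mul_const β).const_add α).add
      (hasDerivAt_sum_mul_exp_affine s a b c τ)).deriv
  rw [hderiv, ((hasDerivAt_sum_mul_exp_affine s a b (fun k => c k * b k) t).const_add β).deriv]
  simp only [mul_assoc, sq]

end SecondDerivative

theorem abs_one_sub_mul_add_mul_le {x y L t : ℝ} (hx : |x| ≤ L) (hy : |y| ≤ L)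
    (ht : t ∈ Set.Icc (0 : ℝ) 1) : |(1 - t) * x + t * y| ≤ L :=
  abs_le.2 <| convex_Icc (-L) L (abs_le.1 hx) (abs_le.1 hy) (sub_nonneg.2 ht.2) ht.1
    (sub_add_cancel 1 t)

theorem norm_sub_sq_div_two_le {E : Type*} [SeminormedAddCommGroup E] {x y : E} {r : ℝ}
    (hx : x ∈ Metric.closedBall 0 r) (hy : y ∈ Metric.closedBall 0 r) :
    ‖x - y‖ ^ 2 / 2 ≤ 2 * r ^ 2 := by
  rw [mem_closedBall_zero_iff] at hx hy
  have h : ‖x - y‖ ≤ 2 * r := by linarith [norm_sub_le x y]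
  nlinarith [norm_nonneg (x - y)]

theorem exp_neg_div_le_exp_add_sub_div {ε L C u v c : ℝ} (hε : 0 < ε) (hu : |u| ≤ L)
    (hv : |v| ≤ L) (hc : c ≤ C) : exp (-(2 * L + C) / ε) ≤ exp ((u + v - c) / ε) := by
  refine exp_le_exp.2 (div_le_div_of_nonneg_right ?_ hε.le)
  linarith [neg_abs_le u, neg_abs_le v]

theorem sum_add_sq_of_sum_eq_zero {ι κ : Type*} [Fintype ι] [Fintype κ] (u : ι → ℝ) (v : κ → ℝ)
    (hv : ∑ j, v j = 0) :
    ∑ p : ι × κ, (u p.1 + v p.2) ^ 2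
      = Fintype.card κ * ∑ i, u i ^ 2 + Fintype.card ι * ∑ j, v j ^ 2 := by
  have hcross : ∀ i, ∑ j, 2 * u i * v j = 0 := fun i => by rw [← mul_sum, hv, mul_zero]
  simp only [Fintype.sum_prod_type, add_sq, sum_add_distrib, hcross, sum_const, card_univ,
    nsmul_eq_mul, mul_zero, add_zero, ← mul_sum]

noncomputable def empiricalDualObjective {n : ℕ} (ε : ℝ) (c : Fin n → Fin n → ℝ)
    (u v : Fin n → ℝ) : ℝ :=
  (1 / (n : ℝ)) * ∑ i, (u i + v i)
    - (ε / (n : ℝ) ^ 2) * ∑ i, ∑ j, exp ((u i + v j - c i j) / ε) + ε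

theorem deriv_deriv_empiricalDualObjective_segment {n : ℕ} {ε : ℝ} (hε : ε ≠ 0)
    (c : Fin n → Fin n → ℝ) (f f' g g' : Fin n → ℝ) (t : ℝ) :
    deriv (deriv fun s => empiricalDualObjective ε c
        (fun i => (1 - s) * f i + s * f' i) (fun j => (1 - s) * g j + s * g' j)) t
      = -(1 / (ε * (n : ℝ) ^ 2) * ∑ p : Fin n × Fin n, (f p.1 - f' p.1 + (g p.2 - g' p.2)) ^ 2
          * exp (((1 - t) * f p.1 + t * f' p.1 + ((1 - t) * g p.2 + t * g' p.2)
            - c p.1 p.2) / ε)) := by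
  set a : Fin n × Fin n → ℝ := fun p => (f p.1 + g p.2 - c p.1 p.2) / ε
  set b : Fin n × Fin n → ℝ := fun p => (f' p.1 - f p.1 + (g' p.2 - g p.2)) / ε
  have hexponent : ∀ (s : ℝ) (p : Fin n × Fin n),
      ((1 - s) * f p.1 + s * f' p.1 + ((1 - s) * g p.2 + s * g' p.2) - c p.1 p.2) / ε
        = a p + s * b p := fun s p => by
    simp only [a, b]
    field_simp
    ring
  have hlinear : ∀ s : ℝ, ∑ i, ((1 - s) * f i + s * f' i + ((1 - s) * g i + s * g' i))
      = ∑ i, (f i + g i) + s * ∑ i, (f' i - f i + (g' i - g i)) := fun s => by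
    rw [mul_sum, ← sum_add_distrib]
    exact sum_congr rfl fun i _ => by ring
  have hsegment : (fun s => empiricalDualObjective ε c
      (fun i => (1 - s) * f i + s * f' i) (fun j => (1 - s) * g j + s * g' j))
      = fun s => ((1 / (n : ℝ)) * ∑ i, (f i + g i) + ε)
          + s * ((1 / (n : ℝ)) * ∑ i, (f' i - f i + (g' i - g i)))
          + ∑ p, -(ε / (n : ℝ) ^ 2) * exp (a p + s * b p) := by
    funext s
    rw [empiricalDualObjective, ← Fintype.sum_prod_type', hlinear]
    simp only [hexponent]
    rw [← mul_sum]
    ring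
  rw [hsegment, deriv_deriv_affine_add_sum_mul_exp, mul_sum, ← sum_neg_distrib]
  refine sum_congr rfl fun p _ => ?_
  rw [hexponent]
  simp only [b]
  field_simp
  ring

theorem empirical_dual_strong_concavity_general {d : ℕ} (n : ℕ) (r ε L : ℝ)
    (hε : 0 < ε)
    (X Y : Fin n → EuclideanSpace ℝ (Fin d))
    (hX : ∀ i, X i ∈ Metric.closedBall (0 : EuclideanSpace ℝ (Fin d)) r)
    (hY : ∀ j, Y j ∈ Metric.closedBall (0 : EuclideanSpace ℝ (Fin d)) r)
    (f f' g g' : Fin n → ℝ)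
    (hf : ∀ i, |f i| ≤ L) (hf' : ∀ i, |f' i| ≤ L)
    (hg : ∀ j, |g j| ≤ L) (hg' : ∀ j, |g' j| ≤ L)
    (hg0 : ∑ j, g j = 0) (hg'0 : ∑ j, g' j = 0)
    (Φ : (Fin n → ℝ) → (Fin n → ℝ) → ℝ)
    (hΦ : ∀ u v, Φ u v = (1 / (n : ℝ)) * ∑ i, (u i + v i)
        - (ε / (n : ℝ) ^ 2) * ∑ i, ∑ j,
            Real.exp ((u i + v j - ‖X i - Y j‖ ^ 2 / 2) / ε) + ε) :
    ∀ t ∈ Set.Icc (0 : ℝ) 1,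
      deriv (deriv (fun s : ℝ =>
          Φ (fun i => (1 - s) * f i + s * f' i) (fun j => (1 - s) * g j + s * g' j))) t
        ≤ -(Real.exp (-(2 * L + 2 * r ^ 2) / ε) / ε) *
            ((1 / (n : ℝ)) * ∑ i, (f i - f' i) ^ 2
              + (1 / (n : ℝ)) * ∑ j, (g j - g' j) ^ 2) := by
  intro t ht
  have hΦ' : Φ = empiricalDualObjective ε fun i j => ‖X i - Y j‖ ^ 2 / 2 := funext₂ hΦ
  have hΔg : ∑ j, (g j - g' j) = 0 := by rw [sum_sub_distrib, hg0, hg'0, sub_zero]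
  rw [hΦ', deriv_deriv_empiricalDualObjective_segment hε.ne']
  calc _ ≤ -(1 / (ε * (n : ℝ) ^ 2) * ∑ p : Fin n × Fin n,
          (f p.1 - f' p.1 + (g p.2 - g' p.2)) ^ 2 * exp (-(2 * L + 2 * r ^ 2) / ε)) := by
        gcongr -(_ * ∑ p, _ * ?_) with p
        exact exp_neg_div_le_exp_add_sub_div hε (abs_one_sub_mul_add_mul_le (hf p.1) (hf' p.1) ht)
          (abs_one_sub_mul_add_mul_le (hg p.2) (hg' p.2) ht)
          (norm_sub_sq_div_two_le (hX p.1) (hY p.2))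
    _ = _ := by
        rw [← sum_mul, sum_add_sq_of_sum_eq_zero (fun i => f i - f' i) _ hΔg]
        rcases Nat.eq_zero_or_pos n with rfl | hn
        · simp
        · simp only [Fintype.card_fin]
          field_simp

/-- Strong concavity of the empirical entropic dual objective. With samples
`X i, Y j ∈ B(0,r)`, potentials (given by their values on the samples) bounded by `L` and
with empirical mean zero on the `Y` samples, the function
`h(t) = Φₙ((1−t)f + tf', (1−t)g + tg')` satisfies
`h''(t) ≤ −δ (‖f−f'‖²_{L²(Pⁿ)} + ‖g−g'‖²_{L²(Qⁿ)})` for `t ∈ [0,1]`, where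
`δ = exp(−(2L+2r²)/ε)/ε`. -/
theorem empirical_dual_strong_concavity {d : ℕ} (n : ℕ) (hn : 0 < n) (r ε L : ℝ)
    (hr : 0 < r) (hε : 0 < ε) (hL : 0 ≤ L)
    (X Y : Fin n → EuclideanSpace ℝ (Fin d))
    (hX : ∀ i, X i ∈ Metric.closedBall (0 : EuclideanSpace ℝ (Fin d)) r)
    (hY : ∀ j, Y j ∈ Metric.closedBall (0 : EuclideanSpace ℝ (Fin d)) r)
    (f f' g g' : Fin n → ℝ)
    (hf : ∀ i, |f i| ≤ L) (hf' : ∀ i, |f' i| ≤ L)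
    (hg : ∀ j, |g j| ≤ L) (hg' : ∀ j, |g' j| ≤ L)
    (hg0 : ∑ j, g j = 0) (hg'0 : ∑ j, g' j = 0)
    (Φ : (Fin n → ℝ) → (Fin n → ℝ) → ℝ)
    (hΦ : ∀ u v, Φ u v = (1 / (n : ℝ)) * ∑ i, (u i + v i)
        - (ε / (n : ℝ) ^ 2) * ∑ i, ∑ j,
            Real.exp ((u i + v j - ‖X i - Y j‖ ^ 2 / 2) / ε) + ε) :
    ∀ t ∈ Set.Icc (0 : ℝ) 1,
      deriv (deriv (fun s : ℝ =>
          Φ (fun i => (1 - s) * f i + s * f' i) (fun j => (1 - s) * g j + s * g' j))) t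
        ≤ -(Real.exp (-(2 * L + 2 * r ^ 2) / ε) / ε) *
            ((1 / (n : ℝ)) * ∑ i, (f i - f' i) ^ 2
              + (1 / (n : ℝ)) * ∑ j, (g j - g' j) ^ 2) :=
  empirical_dual_strong_concavity_general n r ε L hε X Y hX hY f f' g g' hf hf' hg hg' hg0 hg'0 Φ hΦ
end
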